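/- arXiv:1606.07362 — 2 statements merged into one kernel-verified Lean document; each statement's English description precedes it below -/
import Mathlib

section
/- Under misère play, for every game G other than the zero game, G + (conjugate of G) is not equivalent to 0 modulo the universe of all games; that is, there exists a game X with o⁻(G + Ḡ + X) ≠ o⁻(X). -/
namespace SetTheory

universe u

/-- Pre-games, as formerly in Mathlib's `SetTheory.PGame` (removed from Mathlib since). -/
inductive PGame : Type (u + 1)
  | mk : ∀ α β : Type u, (α → PGame) → (β → PGame) → PGame

namespace PGame

/-- The indexing type for allowable moves by Left. -/
def LeftMoves : PGame → Type u
  | mk l _ _ _ => l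

/-- The indexing type for allowable moves by Right. -/
def RightMoves : PGame → Type u
  | mk _ r _ _ => r

/-- The new game after Left makes an allowed move. -/
def moveLeft : ∀ g : PGame, LeftMoves g → PGame
  | mk _l _ L _ => L

/-- The new game after Right makes an allowed move. -/
def moveRight : ∀ g : PGame, RightMoves g → PGame
  | mk _ _r _ R => R

/-- `IsOption x y` means that `x` is either a left or right option for `y`. -/
inductive IsOption : PGame → PGame → Prop
  | moveLeft {x : PGame} (i : x.LeftMoves) : IsOption (x.moveLeft i) x
  | moveRight {x : PGame} (i : x.RightMoves) : IsOption (x.moveRight i) x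

/-- `Subsequent x y` says that `x` can be obtained by playing some nonempty sequence of moves
from `y`. -/
def Subsequent : PGame → PGame → Prop :=
  Relation.TransGen IsOption

/-- The negation of a pre-game. -/
def neg : PGame → PGame
  | ⟨l, r, L, R⟩ => ⟨r, l, fun i => neg (R i), fun i => neg (L i)⟩

instance : Neg PGame :=
  ⟨neg⟩

/-- The sum of two pre-games. -/
noncomputable instance : Add PGame.{u} :=
  ⟨fun x y => by
    induction x generalizing y with | mk xl xr _ _ IHxl IHxr => _
    induction y with | mk yl yr yL yR IHyl IHyr => _
    have y := mk yl yr yL yR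
    refine ⟨xl ⊕ yl, xr ⊕ yr, Sum.rec ?_ ?_, Sum.rec ?_ ?_⟩
    · exact fun i => IHxl i y
    · exact IHyl
    · exact fun i => IHxr i y
    · exact IHyr⟩

end PGame

end SetTheory

open SetTheory

namespace Misere

/-- Misère winning: `(wins G).1` means Left, moving first on `G`, wins under misère play;
`(wins G).2` means Right, moving first, wins. The player unable to move wins. -/
def wins : PGame → Prop × Prop
  | ⟨α, β, L, R⟩ =>
    (IsEmpty α ∨ ∃ i, ¬ (wins (L i)).2,
     IsEmpty β ∨ ∃ j, ¬ (wins (R j)).1)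

/-- Left wins moving first under misère play. -/
def LeftFirst (G : PGame) : Prop := (wins G).1

/-- Right wins moving first under misère play. -/
def RightFirst (G : PGame) : Prop := (wins G).2

/-- Normal-play winning: `(nwins G).1` means Left moving first wins (player unable to move loses). -/
def nwins : PGame → Prop × Prop
  | ⟨α, β, L, R⟩ =>
    (∃ i, ¬ (nwins (L i)).2,
     ∃ j, ¬ (nwins (R j)).1)

/-- Outcome classes. -/
inductive Outcome : Type
  | L | R | N | P
  deriving DecidableEq

/-- The partial order on outcomes: L > P > R, L > N > R, with P and N incomparable. -/
instance : LE Outcome := ⟨fun a b => a = b ∨ a = .R ∨ b = .L⟩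

open Classical in
/-- The misère outcome of a game. -/
noncomputable def misereOutcome (G : PGame) : Outcome :=
  if (wins G).1 then (if (wins G).2 then .N else .L)
  else (if (wins G).2 then .R else .P)

open Classical in
/-- The normal-play outcome of a game. -/
noncomputable def normalOutcome (G : PGame) : Outcome :=
  if (nwins G).1 then (if (nwins G).2 then .N else .L)
  else (if (nwins G).2 then .R else .P)

/-- A game is dicot if every subposition has a Left option iff it has a Right option. -/
def Dicot : PGame → Prop
  | ⟨α, β, L, R⟩ => (IsEmpty α ↔ IsEmpty β) ∧ (∀ i, Dicot (L i)) ∧ (∀ j, Dicot (R j))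

/-- A dead Left end: a Left end all of whose followers are Left ends. -/
def DeadLeftEnd : PGame → Prop
  | ⟨α, _β, _L, R⟩ => IsEmpty α ∧ ∀ j, DeadLeftEnd (R j)

/-- A dead Right end: a Right end all of whose followers are Right ends. -/
def DeadRightEnd : PGame → Prop
  | ⟨_α, β, L, _R⟩ => IsEmpty β ∧ ∀ i, DeadRightEnd (L i)

/-- A follower of `G` is any position reachable from `G`, including `G` itself. -/
def Follower (H G : PGame) : Prop := H = G ∨ PGame.Subsequent H G

/-- An end: a position where some player has no move. -/
def IsEnd (G : PGame) : Prop := IsEmpty G.LeftMoves ∨ IsEmpty G.RightMoves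

/-- A game is dead-ending if every one of its end followers is a dead end. -/
def DeadEnding (G : PGame) : Prop :=
  ∀ H, Follower H G → IsEnd H → (DeadLeftEnd H ∨ DeadRightEnd H)

end Misere

/-!
A game `g` with a Right option is told apart from `0` by `x = {countdown g | }`, whose misère
outcome is `N`. In `g + x` Right must open in `g`, and Left answers by moving `x` to
`countdown g`. Here `countdown k` is a clock only Right can wind down: two forced Right moves,
after which Left restarts it as `countdown k'` for an option `k'` of `k` of her choice. The
second forced Right move is a tempo for Left in the other component, and Left keeps that
component a follower of the current `k`, so the clock outlasts it: Left is the first player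
unable to move, and wins. As `G + -G` has a Right option whenever `G ≠ 0`, the theorem follows.
-/

namespace Misere

open SetTheory PGame Relation

universe u

theorem wellFounded_isOption : WellFounded IsOption :=
  ⟨fun x => by
    induction x with
    | mk α β L R ihL ihR =>
      refine ⟨_, fun y h => ?_⟩
      cases h
      · exact ihL _
      · exact ihR _⟩

theorem leftFirst_of_isEmpty {x : PGame} (h : IsEmpty x.LeftMoves) : LeftFirst x := by
  cases x; exact Or.inl h

theorem rightFirst_of_isEmpty {x : PGame} (h : IsEmpty x.RightMoves) : RightFirst x := by
  cases x; exact Or.inl h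

theorem leftFirst_add_iff {x y : PGame} :
    LeftFirst (x + y) ↔ (IsEmpty x.LeftMoves ∧ IsEmpty y.LeftMoves) ∨
      (∃ i, ¬RightFirst (x.moveLeft i + y)) ∨ ∃ i, ¬RightFirst (x + y.moveLeft i) := by
  cases x; cases y
  exact or_congr isEmpty_sum Sum.exists

theorem rightFirst_add_iff {x y : PGame} :
    RightFirst (x + y) ↔ (IsEmpty x.RightMoves ∧ IsEmpty y.RightMoves) ∨
      (∃ j, ¬LeftFirst (x.moveRight j + y)) ∨ ∃ j, ¬LeftFirst (x + y.moveRight j) := by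
  cases x; cases y
  exact or_congr isEmpty_sum Sum.exists

def leftStep (y : PGame.{u}) : PGame.{u} := ⟨PUnit, PEmpty, fun _ => y, PEmpty.elim⟩

def rightStep (y : PGame.{u}) : PGame.{u} := ⟨PEmpty, PUnit, PEmpty.elim, fun _ => y⟩

theorem leftFirst_leftStep {y : PGame} : LeftFirst (leftStep y) ↔ ¬RightFirst y := by
  simp [LeftFirst, RightFirst, leftStep, wins]

theorem rightFirst_rightStep {y : PGame} : RightFirst (rightStep y) ↔ ¬LeftFirst y := by
  simp [LeftFirst, RightFirst, rightStep, wins]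

theorem leftFirst_add_of_isEmpty {x y : PGame} (hy : IsEmpty y.LeftMoves)
    (h : ∀ i, ¬RightFirst (x.moveLeft i + y)) : LeftFirst (x + y) := by
  rcases isEmpty_or_nonempty x.LeftMoves with hx | ⟨⟨i⟩⟩
  · exact leftFirst_add_iff.2 (Or.inl ⟨hx, hy⟩)
  · exact leftFirst_add_iff.2 (Or.inr (Or.inl ⟨i, h i⟩))

theorem not_rightFirst_add_rightStep {x y : PGame}
    (h : ∀ j, LeftFirst (x.moveRight j + rightStep y)) (hy : LeftFirst (x + y)) :
    ¬RightFirst (x + rightStep y) := by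
  rw [rightFirst_add_iff]
  rintro (⟨-, h₀⟩ | ⟨j, hj⟩ | ⟨_, hj⟩)
  · exact h₀.false PUnit.unit
  · exact hj (h j)
  · exact hj hy

def countdown : PGame.{u} → PGame.{u}
  | ⟨α, β, L, R⟩ => rightStep (rightStep
      ⟨α ⊕ β, PEmpty, Sum.elim (fun i => countdown (L i)) (fun j => countdown (R j)), PEmpty.elim⟩)

def countdownChoice (k : PGame.{u}) : PGame.{u} :=
  ⟨k.LeftMoves ⊕ k.RightMoves, PEmpty,
    Sum.elim (fun i => countdown (k.moveLeft i)) (fun j => countdown (k.moveRight j)), PEmpty.elim⟩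

theorem countdown_eq (k : PGame) : countdown k = rightStep (rightStep (countdownChoice k)) := by
  cases k; rfl

theorem exists_countdownChoice_moveLeft_eq {k k' : PGame} (h : IsOption k' k) :
    ∃ i, (countdownChoice k).moveLeft i = countdown k' := by
  cases h with
  | moveLeft i => exact ⟨Sum.inl i, rfl⟩
  | moveRight j => exact ⟨Sum.inr j, rfl⟩

theorem transGen_moveLeft_moveRight (x : PGame) (j : x.RightMoves)
    (i : (x.moveRight j).LeftMoves) : TransGen IsOption ((x.moveRight j).moveLeft i) x :=
  .head (.moveLeft i) (.single (.moveRight j))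

section CountdownChoice

variable {k : PGame}
  (hk : ∀ k', IsOption k' k → ∀ x, ReflTransGen IsOption x k' → ¬RightFirst (x + countdown k'))
include hk

theorem leftFirst_add_countdownChoice {x : PGame} (hx : TransGen IsOption x k) :
    LeftFirst (x + countdownChoice k) := by
  obtain ⟨k', hxk', hk'⟩ := TransGen.tail'_iff.1 hx
  obtain ⟨i, hi⟩ := exists_countdownChoice_moveLeft_eq hk'
  exact leftFirst_add_iff.2 (Or.inr (Or.inr ⟨i, hi ▸ hk k' hk' x hxk'⟩))

theorem not_rightFirst_add_rightStep_countdownChoice (x : PGame) (hx : TransGen IsOption x k) :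
    ¬RightFirst (x + rightStep (countdownChoice k)) := by
  induction x using wellFounded_isOption.transGen.induction with
  | _ x ih =>
  refine not_rightFirst_add_rightStep
    (fun j => leftFirst_add_of_isEmpty PEmpty.instIsEmpty fun i => ?_)
    (leftFirst_add_countdownChoice hk hx)
  have hjx := transGen_moveLeft_moveRight x j i
  exact ih _ hjx (hjx.trans hx)

end CountdownChoice

theorem not_rightFirst_add_countdown (k : PGame) :
    ∀ x, ReflTransGen IsOption x k → ¬RightFirst (x + countdown k) := by
  induction k using wellFounded_isOption.induction with
  | _ k ihk =>
  intro x hx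
  induction x using wellFounded_isOption.transGen.induction with
  | _ x ih =>
  rw [countdown_eq] at ih ⊢
  refine not_rightFirst_add_rightStep
    (fun j => leftFirst_add_of_isEmpty PEmpty.instIsEmpty fun i => ?_)
    (leftFirst_add_of_isEmpty PEmpty.instIsEmpty fun i =>
      not_rightFirst_add_rightStep_countdownChoice ihk _ (.head' (.moveLeft i) hx))
  have hjx := transGen_moveLeft_moveRight x j i
  exact ih _ hjx (hjx.to_reflTransGen.trans hx)

theorem misereOutcome_eq_N_iff {x : PGame} :
    misereOutcome x = .N ↔ LeftFirst x ∧ RightFirst x := by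
  unfold misereOutcome LeftFirst RightFirst
  split_ifs <;> simp_all

theorem exists_misereOutcome_add_ne {g : PGame} (hg : Nonempty g.RightMoves) :
    ∃ x, misereOutcome (g + x) ≠ misereOutcome x := by
  have hcountdown : ¬RightFirst (countdown g) := by
    rw [countdown_eq, rightFirst_rightStep, not_not]
    exact leftFirst_of_isEmpty PEmpty.instIsEmpty
  have hx : misereOutcome (leftStep (countdown g)) = .N :=
    misereOutcome_eq_N_iff.2
      ⟨leftFirst_leftStep.2 hcountdown, rightFirst_of_isEmpty PEmpty.instIsEmpty⟩
  have hgx : ¬RightFirst (g + leftStep (countdown g)) := by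
    rw [rightFirst_add_iff]
    rintro (⟨h₀, -⟩ | ⟨j, hj⟩ | ⟨⟨⟩, -⟩)
    · exact h₀.false hg.some
    · exact hj (leftFirst_add_iff.2 (Or.inr (Or.inr ⟨PUnit.unit,
        not_rightFirst_add_countdown g _ (.single (.moveRight j))⟩)))
  exact ⟨_, fun h => hgx (misereOutcome_eq_N_iff.1 (h.trans hx)).2⟩

theorem nonempty_rightMoves_add_neg {g : PGame}
    (h : Nonempty g.LeftMoves ∨ Nonempty g.RightMoves) : Nonempty (g + -g).RightMoves := by
  cases g
  rcases h with ⟨⟨i⟩⟩ | ⟨⟨j⟩⟩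
  exacts [⟨Sum.inr i⟩, ⟨Sum.inl j⟩]

end Misere

open Misere in
/-- no nonzero game has an additive inverse in general misère play:
if `G` is not the zero game then `G + Ḡ` is distinguishable from `0`. -/
theorem no_nonzero_inverse (G : PGame)
    (h : Nonempty G.LeftMoves ∨ Nonempty G.RightMoves) :
    ∃ X : PGame, misereOutcome (G + -G + X) ≠ misereOutcome X :=
  exists_misereOutcome_add_ne (nonempty_rightMoves_add_neg h)
end

section
/- Every dead end is invertible in the universe E of dead-ending games: if G is a dead Left end or dead Right end, then G + Ḡ ≡ 0 (mod E), i.e., o⁻(G + Ḡ + X) = o⁻(X) for all dead-ending games X. In particular every integer n (in normal-play canonical form) is invertible modulo E. -/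
namespace SetTheory

universe u

namespace PGame

instance : Zero PGame :=
  ⟨⟨PEmpty, PEmpty, PEmpty.elim, PEmpty.elim⟩⟩

end PGame

end SetTheory

open SetTheory

namespace Misere

/-- The integer `n ≥ 0` in normal-play canonical form: `0 = {·|·}`, `n+1 = {n | ·}`. -/
def pint : ℕ → PGame
  | 0 => 0
  | n + 1 => PGame.mk PUnit PEmpty (fun _ => pint n) (fun x => x.elim)

end Misere

/-!
Let `A` be a dead Left end and `X` dead-ending. In `A + -A + X` Left answers Right's move
`A → a` by `-A → -a` and Right answers Left's move `-A → -a` by `A → a`, so by induction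
`A + -A + X` has the same misère outcome as `X` as long as the player to move has a move in `X`.
When that player has none, `X` is a dead end, and then `A + -A + X` is a race: no move of one
player changes the length of the other's shortest run to an end, so the player to move wins iff
their shortest run is at most the opponent's. The runs in `A` and `-A` have equal length, so the
player who has no move in `X` still wins. Dead Right ends follow by negation, and the integers
are dead Right ends.
-/

namespace SetTheory.PGame

def leftOptions (G : PGame) : Set PGame := Set.range G.moveLeft

def rightOptions (G : PGame) : Set PGame := Set.range G.moveRight

theorem moveInduction {P : PGame → Prop}
    (h : ∀ G, (∀ G' ∈ G.leftOptions, P G') → (∀ G' ∈ G.rightOptions, P G') → P G)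
    (G : PGame) : P G := by
  induction G with
  | mk _ _ _ _ ihL ihR =>
    exact h _ (by rintro _ ⟨i, rfl⟩; exact ihL i) (by rintro _ ⟨j, rfl⟩; exact ihR j)

theorem isOption_iff {G' G : PGame} :
    IsOption G' G ↔ G' ∈ G.leftOptions ∨ G' ∈ G.rightOptions := by
  constructor
  · rintro (i | j)
    exacts [.inl ⟨i, rfl⟩, .inr ⟨j, rfl⟩]
  · rintro (⟨i, rfl⟩ | ⟨j, rfl⟩)
    exacts [.moveLeft i, .moveRight j]

theorem leftOptions_add (x y : PGame) :
    (x + y).leftOptions = (· + y) '' x.leftOptions ∪ (x + ·) '' y.leftOptions := by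
  cases x; cases y
  simp only [leftOptions, ← Set.range_comp, ← Set.Sum.elim_range]
  rfl

theorem rightOptions_add (x y : PGame) :
    (x + y).rightOptions = (· + y) '' x.rightOptions ∪ (x + ·) '' y.rightOptions := by
  cases x; cases y
  simp only [rightOptions, ← Set.range_comp, ← Set.Sum.elim_range]
  rfl

theorem add_right_mem_leftOptions_add {x x' : PGame} (h : x' ∈ x.leftOptions) (y : PGame) :
    x' + y ∈ (x + y).leftOptions := by
  rw [leftOptions_add]; exact .inl ⟨x', h, rfl⟩

theorem add_left_mem_leftOptions_add {y y' : PGame} (h : y' ∈ y.leftOptions) (x : PGame) :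
    x + y' ∈ (x + y).leftOptions := by
  rw [leftOptions_add]; exact .inr ⟨y', h, rfl⟩

theorem add_right_mem_rightOptions_add {x x' : PGame} (h : x' ∈ x.rightOptions) (y : PGame) :
    x' + y ∈ (x + y).rightOptions := by
  rw [rightOptions_add]; exact .inl ⟨x', h, rfl⟩

theorem add_left_mem_rightOptions_add {y y' : PGame} (h : y' ∈ y.rightOptions) (x : PGame) :
    x + y' ∈ (x + y).rightOptions := by
  rw [rightOptions_add]; exact .inr ⟨y', h, rfl⟩

instance : InvolutiveNeg PGame where
  neg_neg G := by
    induction G with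
    | mk _ _ _ _ ihL ihR =>
      change PGame.mk _ _ (fun i => - -_) (fun j => - -_) = _
      simp only [ihL, ihR]

theorem neg_add (x y : PGame) : -(x + y) = -x + -y := by
  induction x generalizing y with
  | mk _ _ _ _ ihxL ihxR =>
  induction y with
  | mk _ _ _ _ ihyL ihyR =>
  refine congrArg₂ (PGame.mk _ _) (funext ?_) (funext ?_) <;> rintro (i | i)
  exacts [ihxR i _, ihyR i, ihxL i _, ihyL i]

theorem leftOptions_neg (x : PGame) : (-x).leftOptions = -x.rightOptions := by
  cases x
  simp only [leftOptions, rightOptions, ← Set.image_neg_eq_neg, ← Set.range_comp]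
  rfl

theorem rightOptions_neg (x : PGame) : (-x).rightOptions = -x.leftOptions := by
  cases x
  simp only [leftOptions, rightOptions, ← Set.image_neg_eq_neg, ← Set.range_comp]
  rfl

theorem isOption_neg {x y : PGame} (h : IsOption x y) : IsOption (-x) (-y) := by
  rw [isOption_iff, leftOptions_neg, rightOptions_neg, Set.neg_mem_neg, Set.neg_mem_neg]
  exact (isOption_iff.1 h).symm

theorem Subsequent.neg {x y : PGame} (h : Subsequent x y) : Subsequent (-x) (-y) :=
  Relation.TransGen.lift (fun G : PGame => -G) (fun _ _ => isOption_neg) _ _ h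

end SetTheory.PGame

namespace Misere

open PGame

theorem leftFirst_iff (G : PGame) :
    LeftFirst G ↔ G.leftOptions = ∅ ∨ ∃ G' ∈ G.leftOptions, ¬RightFirst G' := by
  cases G
  rw [leftOptions, Set.range_eq_empty_iff, Set.exists_range_iff]
  rfl

theorem rightFirst_iff (G : PGame) :
    RightFirst G ↔ G.rightOptions = ∅ ∨ ∃ G' ∈ G.rightOptions, ¬LeftFirst G' := by
  cases G
  rw [rightOptions, Set.range_eq_empty_iff, Set.exists_range_iff]
  rfl

theorem leftFirst_of_mem {G G' : PGame} (h : G' ∈ G.leftOptions) (hG' : ¬RightFirst G') :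
    LeftFirst G :=
  (leftFirst_iff G).2 (.inr ⟨G', h, hG'⟩)

theorem rightFirst_of_mem {G G' : PGame} (h : G' ∈ G.rightOptions) (hG' : ¬LeftFirst G') :
    RightFirst G :=
  (rightFirst_iff G).2 (.inr ⟨G', h, hG'⟩)

theorem wins_neg (G : PGame) :
    (LeftFirst (-G) ↔ RightFirst G) ∧ (RightFirst (-G) ↔ LeftFirst G) := by
  induction G with
  | mk _ _ _ _ ihL ihR =>
    exact ⟨or_congr Iff.rfl (exists_congr fun j => not_congr (ihR j).2),
      or_congr Iff.rfl (exists_congr fun i => not_congr (ihL i).1)⟩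

theorem leftFirst_neg (G : PGame) : LeftFirst (-G) ↔ RightFirst G := (wins_neg G).1

theorem rightFirst_neg (G : PGame) : RightFirst (-G) ↔ LeftFirst G := (wins_neg G).2

theorem misereOutcome_congr {G H : PGame} (hL : LeftFirst G ↔ LeftFirst H)
    (hR : RightFirst G ↔ RightFirst H) : misereOutcome G = misereOutcome H := by
  classical
  unfold misereOutcome
  exact if_congr hL (if_congr hR rfl rfl) (if_congr hR rfl rfl)

/-- The length of Right's shortest run of consecutive moves to a Right end
(`⨅` over no moves is `0` in `ℕ`). -/
noncomputable def rdepth : PGame → ℕ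
  | ⟨_, _, _, R⟩ => ⨅ j, rdepth (R j) + 1

noncomputable def ldepth (G : PGame) : ℕ := rdepth (-G)

theorem rdepth_eq_zero {G : PGame} (h : G.rightOptions = ∅) : rdepth G = 0 := by
  obtain ⟨_, β, _, _⟩ := G
  have : IsEmpty β := Set.range_eq_empty_iff.1 h
  exact Nat.iInf_of_empty _

theorem rdepth_le_of_mem {G G' : PGame} (h : G' ∈ G.rightOptions) :
    rdepth G ≤ rdepth G' + 1 := by
  cases G
  obtain ⟨j, rfl⟩ := h
  exact ciInf_le (OrderBot.bddBelow _) j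

theorem exists_rdepth_eq_of_nonempty {G : PGame} (h : G.rightOptions.Nonempty) :
    ∃ G' ∈ G.rightOptions, rdepth G' + 1 = rdepth G := by
  obtain ⟨_, β, _, R⟩ := G
  have : Nonempty β := Set.range_nonempty_iff_nonempty.1 h
  obtain ⟨j, hj⟩ := ciInf_mem (fun j => rdepth (R j) + 1)
  exact ⟨_, ⟨j, rfl⟩, hj⟩

theorem rdepth_le_iff {G : PGame} {n : ℕ} :
    rdepth G ≤ n ↔ G.rightOptions = ∅ ∨ ∃ G' ∈ G.rightOptions, rdepth G' < n := by
  constructor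
  · intro hn
    obtain h | h := G.rightOptions.eq_empty_or_nonempty
    · exact .inl h
    · obtain ⟨G', hG', hd⟩ := exists_rdepth_eq_of_nonempty h
      exact .inr ⟨G', hG', by omega⟩
  · rintro (h | ⟨G', hG', hd⟩)
    · simp [rdepth_eq_zero h]
    · have := rdepth_le_of_mem hG'
      omega

theorem rdepth_add (x y : PGame) : rdepth (x + y) = rdepth x + rdepth y := by
  induction x using moveInduction generalizing y with
  | h x _ ihx =>
  induction y using moveInduction with
  | h y _ ihy =>
  apply le_antisymm
  · obtain hx | hx := x.rightOptions.eq_empty_or_nonempty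
    · obtain hy | hy := y.rightOptions.eq_empty_or_nonempty
      · simp [rdepth_eq_zero, rightOptions_add, hx, hy]
      · obtain ⟨y', hy', hd⟩ := exists_rdepth_eq_of_nonempty hy
        have := rdepth_le_of_mem (add_left_mem_rightOptions_add hy' x)
        rw [ihy y' hy'] at this
        omega
    · obtain ⟨x', hx', hd⟩ := exists_rdepth_eq_of_nonempty hx
      have := rdepth_le_of_mem (add_right_mem_rightOptions_add hx' y)
      rw [ihx x' hx'] at this
      omega
  · obtain h | h := (x + y).rightOptions.eq_empty_or_nonempty
    · rw [rightOptions_add, Set.union_empty_iff, Set.image_eq_empty, Set.image_eq_empty] at h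
      simp [rdepth_eq_zero, h]
    · obtain ⟨z, hz, hd⟩ := exists_rdepth_eq_of_nonempty h
      rw [rightOptions_add] at hz
      rcases hz with ⟨x', hx', rfl⟩ | ⟨y', hy', rfl⟩
      · have := rdepth_le_of_mem hx'
        rw [ihx x' hx'] at hd
        omega
      · have := rdepth_le_of_mem hy'
        rw [ihy y' hy'] at hd
        omega

theorem ldepth_eq_zero {G : PGame} (h : G.leftOptions = ∅) : ldepth G = 0 :=
  rdepth_eq_zero (by rw [rightOptions_neg, h, Set.neg_empty])

theorem ldepth_neg (G : PGame) : ldepth (-G) = rdepth G := by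
  rw [ldepth, neg_neg]

theorem ldepth_add (x y : PGame) : ldepth (x + y) = ldepth x + ldepth y := by
  rw [ldepth, neg_add, rdepth_add, ldepth, ldepth]

theorem ldepth_le_iff {G : PGame} {n : ℕ} :
    ldepth G ≤ n ↔ G.leftOptions = ∅ ∨ ∃ G' ∈ G.leftOptions, ldepth G' < n := by
  rw [ldepth, rdepth_le_iff, rightOptions_neg, Set.neg_eq_empty]
  refine or_congr Iff.rfl ⟨fun ⟨G', hG', hd⟩ => ⟨-G', hG', ?_⟩,
    fun ⟨G', hG', hd⟩ => ⟨-G', ?_, hd⟩⟩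
  · rwa [ldepth_neg]
  · rwa [Set.mem_neg, neg_neg]

inductive IsRace : PGame → Prop
  | intro {G : PGame} (rdepth_left : ∀ G' ∈ G.leftOptions, rdepth G' = rdepth G)
      (ldepth_right : ∀ G' ∈ G.rightOptions, ldepth G' = ldepth G)
      (left : ∀ G' ∈ G.leftOptions, IsRace G') (right : ∀ G' ∈ G.rightOptions, IsRace G') :
      IsRace G

theorem IsRace.wins_iff {G : PGame} (hG : IsRace G) :
    (LeftFirst G ↔ ldepth G ≤ rdepth G) ∧ (RightFirst G ↔ rdepth G ≤ ldepth G) := by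
  induction G using moveInduction with
  | h G ihL ihR =>
  obtain ⟨hdL, hdR, hL, hR⟩ := hG
  constructor
  · rw [leftFirst_iff, ldepth_le_iff]
    refine or_congr Iff.rfl (exists_congr fun G' => and_congr_right fun hG' => ?_)
    rw [(ihL G' hG' (hL G' hG')).2, hdL G' hG', not_le]
  · rw [rightFirst_iff, rdepth_le_iff]
    refine or_congr Iff.rfl (exists_congr fun G' => and_congr_right fun hG' => ?_)
    rw [(ihR G' hG' (hR G' hG')).1, hdR G' hG', not_le]

theorem IsRace.add {x y : PGame} (hx : IsRace x) (hy : IsRace y) : IsRace (x + y) := by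
  induction x using moveInduction generalizing y with
  | h x ihxL ihxR =>
  induction y using moveInduction with
  | h y ihyL ihyR =>
  obtain ⟨hdxL, hdxR, hxL, hxR⟩ := hx
  obtain ⟨hdyL, hdyR, hyL, hyR⟩ := hy
  constructor
  · rw [leftOptions_add]
    rintro _ (⟨x', hx', rfl⟩ | ⟨y', hy', rfl⟩)
    · rw [rdepth_add, rdepth_add, hdxL x' hx']
    · rw [rdepth_add, rdepth_add, hdyL y' hy']
  · rw [rightOptions_add]
    rintro _ (⟨x', hx', rfl⟩ | ⟨y', hy', rfl⟩)
    · rw [ldepth_add, ldepth_add, hdxR x' hx']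
    · rw [ldepth_add, ldepth_add, hdyR y' hy']
  · rw [leftOptions_add]
    rintro _ (⟨x', hx', rfl⟩ | ⟨y', hy', rfl⟩)
    · exact ihxL x' hx' (hxL x' hx') ⟨hdyL, hdyR, hyL, hyR⟩
    · exact ihyL y' hy' (hyL y' hy')
  · rw [rightOptions_add]
    rintro _ (⟨x', hx', rfl⟩ | ⟨y', hy', rfl⟩)
    · exact ihxR x' hx' (hxR x' hx') ⟨hdyL, hdyR, hyL, hyR⟩
    · exact ihyR y' hy' (hyR y' hy')

theorem DeadLeftEnd.leftOptions_eq_empty {G : PGame} (hG : DeadLeftEnd G) :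
    G.leftOptions = ∅ := by
  obtain ⟨_, _, _, _⟩ := G
  exact Set.range_eq_empty_iff.2 hG.1

theorem DeadLeftEnd.of_mem_rightOptions {G G' : PGame} (hG : DeadLeftEnd G)
    (h : G' ∈ G.rightOptions) : DeadLeftEnd G' := by
  obtain ⟨_, _, _, _⟩ := G
  obtain ⟨j, rfl⟩ := h
  exact hG.2 j

theorem DeadRightEnd.rightOptions_eq_empty {G : PGame} (hG : DeadRightEnd G) :
    G.rightOptions = ∅ := by
  obtain ⟨_, _, _, _⟩ := G
  exact Set.range_eq_empty_iff.2 hG.1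

theorem DeadRightEnd.of_mem_leftOptions {G G' : PGame} (hG : DeadRightEnd G)
    (h : G' ∈ G.leftOptions) : DeadRightEnd G' := by
  obtain ⟨_, _, _, _⟩ := G
  obtain ⟨i, rfl⟩ := h
  exact hG.2 i

theorem DeadLeftEnd.neg {G : PGame} (hG : DeadLeftEnd G) : DeadRightEnd (-G) := by
  induction G with
  | mk _ _ _ _ _ ih => exact ⟨hG.1, fun j => ih j (hG.2 j)⟩

theorem DeadRightEnd.neg {G : PGame} (hG : DeadRightEnd G) : DeadLeftEnd (-G) := by
  induction G with
  | mk _ _ _ _ ih _ => exact ⟨hG.1, fun i => ih i (hG.2 i)⟩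

theorem DeadLeftEnd.isRace {G : PGame} (hG : DeadLeftEnd G) : IsRace G := by
  induction G using moveInduction with
  | h G _ ih =>
  refine ⟨by simp [hG.leftOptions_eq_empty], fun G' hG' => ?_, by simp [hG.leftOptions_eq_empty],
    fun G' hG' => ih G' hG' (hG.of_mem_rightOptions hG')⟩
  rw [ldepth_eq_zero hG.leftOptions_eq_empty,
    ldepth_eq_zero (hG.of_mem_rightOptions hG').leftOptions_eq_empty]

theorem DeadRightEnd.isRace {G : PGame} (hG : DeadRightEnd G) : IsRace G := by
  induction G using moveInduction with
  | h G ih _ =>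
  refine ⟨fun G' hG' => ?_, by simp [hG.rightOptions_eq_empty],
    fun G' hG' => ih G' hG' (hG.of_mem_leftOptions hG'), by simp [hG.rightOptions_eq_empty]⟩
  rw [rdepth_eq_zero hG.rightOptions_eq_empty,
    rdepth_eq_zero (hG.of_mem_leftOptions hG').rightOptions_eq_empty]

theorem DeadLeftEnd.leftFirst_add_neg_add {A X : PGame} (hA : DeadLeftEnd A)
    (hX : DeadLeftEnd X) : LeftFirst (A + -A + X) := by
  rw [((hA.isRace.add hA.neg.isRace).add hX.isRace).wins_iff.1, ldepth_add, ldepth_add,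
    rdepth_add, rdepth_add, ldepth_neg, ldepth_eq_zero hA.leftOptions_eq_empty,
    ldepth_eq_zero hX.leftOptions_eq_empty, rdepth_eq_zero hA.neg.rightOptions_eq_empty]
  omega

theorem DeadLeftEnd.rightFirst_add_neg_add {A X : PGame} (hA : DeadLeftEnd A)
    (hX : DeadRightEnd X) : RightFirst (A + -A + X) := by
  rw [((hA.isRace.add hA.neg.isRace).add hX.isRace).wins_iff.2, ldepth_add, ldepth_add,
    rdepth_add, rdepth_add, ldepth_neg, ldepth_eq_zero hA.leftOptions_eq_empty,
    rdepth_eq_zero hX.rightOptions_eq_empty, rdepth_eq_zero hA.neg.rightOptions_eq_empty]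
  omega

theorem DeadEnding.of_isOption {X X' : PGame} (hX : DeadEnding X) (h : IsOption X' X) :
    DeadEnding X' := fun H hH => hX H <| .inr <| hH.elim (· ▸ .single h) (.tail · h)

theorem DeadEnding.deadLeftEnd {X : PGame} (hX : DeadEnding X) (h : X.leftOptions = ∅) :
    DeadLeftEnd X := by
  obtain ⟨_, _, _, _⟩ := X
  have hL : IsEmpty _ := Set.range_eq_empty_iff.1 h
  rcases hX _ (.inl rfl) (.inl hL) with hX | ⟨hR, -⟩
  exacts [hX, ⟨hL, hR.elim⟩]

theorem DeadEnding.deadRightEnd {X : PGame} (hX : DeadEnding X) (h : X.rightOptions = ∅) :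
    DeadRightEnd X := by
  obtain ⟨_, _, _, _⟩ := X
  have hR : IsEmpty _ := Set.range_eq_empty_iff.1 h
  rcases hX _ (.inl rfl) (.inr hR) with ⟨hL, -⟩ | hX
  exacts [⟨hR, hL.elim⟩, hX]

theorem IsEnd.neg {G : PGame} (hG : IsEnd G) : IsEnd (-G) := by
  cases G
  exact hG.symm

theorem DeadEnding.neg {X : PGame} (hX : DeadEnding X) : DeadEnding (-X) := by
  intro H hH hE
  have hH' : Follower (-H) X := by
    rcases hH with rfl | hH
    exacts [.inl (neg_neg X), .inr (neg_neg X ▸ hH.neg)]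
  rcases hX _ hH' hE.neg with hD | hD
  exacts [.inr (neg_neg H ▸ hD.neg), .inl (neg_neg H ▸ hD.neg)]

theorem DeadEnding.of_mem_leftOptions {X X' : PGame} (hX : DeadEnding X)
    (h : X' ∈ X.leftOptions) : DeadEnding X' :=
  hX.of_isOption (isOption_iff.2 (.inl h))

theorem DeadEnding.of_mem_rightOptions {X X' : PGame} (hX : DeadEnding X)
    (h : X' ∈ X.rightOptions) : DeadEnding X' :=
  hX.of_isOption (isOption_iff.2 (.inr h))

theorem DeadLeftEnd.leftOptions_add_neg_add {A : PGame} (hA : DeadLeftEnd A) (X : PGame) :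
    (A + -A + X).leftOptions =
      (fun a => A + -a + X) '' A.rightOptions ∪ (A + -A + ·) '' X.leftOptions := by
  rw [leftOptions_add, leftOptions_add, hA.leftOptions_eq_empty, leftOptions_neg,
    ← Set.image_neg_eq_neg]
  simp only [Set.image_empty, Set.empty_union, Set.image_image]

theorem DeadLeftEnd.rightOptions_add_neg_add {A : PGame} (hA : DeadLeftEnd A) (X : PGame) :
    (A + -A + X).rightOptions =
      (fun a => a + -A + X) '' A.rightOptions ∪ (A + -A + ·) '' X.rightOptions := by
  rw [rightOptions_add, rightOptions_add, rightOptions_neg, hA.leftOptions_eq_empty,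
    Set.neg_empty]
  simp only [Set.image_empty, Set.union_empty, Set.image_image]

theorem DeadLeftEnd.wins_add_neg_add {A X : PGame} (hA : DeadLeftEnd A) (hX : DeadEnding X) :
    (LeftFirst (A + -A + X) ↔ LeftFirst X) ∧ (RightFirst (A + -A + X) ↔ RightFirst X) := by
  induction A using moveInduction generalizing X with
  | h A _ ihA =>
  induction X using moveInduction with
  | h X ihXL ihXR =>
  have ihA' a (ha : a ∈ A.rightOptions) := ihA a ha (hA.of_mem_rightOptions ha) hX
  have ihXL' x (hx : x ∈ X.leftOptions) := ihXL x hx (hX.of_mem_leftOptions hx)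
  have ihXR' x (hx : x ∈ X.rightOptions) := ihXR x hx (hX.of_mem_rightOptions hx)
  constructor
  · constructor
    · rw [leftFirst_iff, hA.leftOptions_add_neg_add, Set.union_empty_iff, Set.image_eq_empty,
        Set.image_eq_empty]
      rintro (⟨-, h⟩ | ⟨_, ⟨a, ha, rfl⟩ | ⟨x, hx, rfl⟩, h⟩)
      · exact (leftFirst_iff X).2 (.inl h)
      · by_contra hXL
        exact h (rightFirst_of_mem (add_right_mem_rightOptions_add
          (add_right_mem_rightOptions_add ha _) X) (by rwa [(ihA' a ha).1]))
      · exact leftFirst_of_mem hx (by rwa [← (ihXL' x hx).2])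
    · rw [leftFirst_iff X]
      rintro (h | ⟨x, hx, h⟩)
      · exact hA.leftFirst_add_neg_add (hX.deadLeftEnd h)
      · exact leftFirst_of_mem (add_left_mem_leftOptions_add hx _) (by rwa [(ihXL' x hx).2])
  · constructor
    · rw [rightFirst_iff, hA.rightOptions_add_neg_add, Set.union_empty_iff, Set.image_eq_empty,
        Set.image_eq_empty]
      rintro (⟨-, h⟩ | ⟨_, ⟨a, ha, rfl⟩ | ⟨x, hx, rfl⟩, h⟩)
      · exact (rightFirst_iff X).2 (.inl h)
      · by_contra hXR
        have hneg : -a ∈ (-A).leftOptions := by rwa [leftOptions_neg, Set.neg_mem_neg]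
        exact h (leftFirst_of_mem (add_right_mem_leftOptions_add
          (add_left_mem_leftOptions_add hneg a) X) (by rwa [(ihA' a ha).2]))
      · exact rightFirst_of_mem hx (by rwa [← (ihXR' x hx).1])
    · rw [rightFirst_iff X]
      rintro (h | ⟨x, hx, h⟩)
      · exact hA.rightFirst_add_neg_add (hX.deadRightEnd h)
      · exact rightFirst_of_mem (add_left_mem_rightOptions_add hx _) (by rwa [(ihXR' x hx).1])

theorem DeadLeftEnd.misereOutcome_add_neg_add {A X : PGame} (hA : DeadLeftEnd A)
    (hX : DeadEnding X) : misereOutcome (A + -A + X) = misereOutcome X :=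
  misereOutcome_congr (hA.wins_add_neg_add hX).1 (hA.wins_add_neg_add hX).2

theorem DeadRightEnd.misereOutcome_add_neg_add {G X : PGame} (hG : DeadRightEnd G)
    (hX : DeadEnding X) : misereOutcome (G + -G + X) = misereOutcome X := by
  have h := hG.neg.wins_add_neg_add hX.neg
  rw [← neg_add, ← neg_add, leftFirst_neg, rightFirst_neg, leftFirst_neg, rightFirst_neg] at h
  exact misereOutcome_congr h.2 h.1

theorem deadRightEnd_pint (n : ℕ) : DeadRightEnd (pint n) := by
  induction n with
  | zero => exact ⟨inferInstanceAs (IsEmpty PEmpty), fun i => i.elim⟩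
  | succ n ih => exact ⟨inferInstanceAs (IsEmpty PEmpty), fun _ => ih⟩

/-- every dead end is invertible modulo the universe `E` of dead-ending
games; in particular every integer is. -/
theorem dead_end_invertible :
    (∀ G : PGame, (DeadLeftEnd G ∨ DeadRightEnd G) →
      ∀ X : PGame, DeadEnding X → misereOutcome (G + -G + X) = misereOutcome X) ∧
    (∀ n : ℕ, ∀ X : PGame, DeadEnding X →
      misereOutcome (pint n + -pint n + X) = misereOutcome X) :=
  ⟨fun _ hG _ hX => hG.elim (·.misereOutcome_add_neg_add hX) (·.misereOutcome_add_neg_add hX),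
    fun n _ hX => (deadRightEnd_pint n).misereOutcome_add_neg_add hX⟩

end Misere
end
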